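/- arXiv:2403.03912 — 2 statements merged into one kernel-verified Lean document; each statement's English description precedes it below -/
import Mathlib

section
/- Let b > 2 be an integer and d a digit with 0 < d < b. Then b·log(b) + ψ(d/b) − ψ(1) < K(b,{d}) < b·log(b) + ψ((d+1)/b) − ψ(1). -/
open MeasureTheory Real ENNReal

/-- The digamma function `ψ(x) = d/dx log Γ(x)`. -/
noncomputable def digamma (x : ℝ) : ℝ := deriv (fun y => Real.log (Real.Gamma y)) x

/-- The Kempner sum `K(b,E)`: sum of reciprocals of positive integers whose
base-`b` digits all avoid the excluded set `E`. -/
noncomputable def kempnerSum (b : ℕ) (E : Finset ℕ) : ℝ :=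
  ∑' n : ℕ, if n ≠ 0 ∧ ∀ d ∈ Nat.digits b n, d ∉ E then (n : ℝ)⁻¹ else 0

/-- The measure `μ_{b,E}` on `[0,1)`: the sum, over all finite strings of admissible
digits (digits `< b` not in `E`), of the weighted Dirac mass `b^{-l} δ_{n(X)/b^l}`. -/
noncomputable def kempnerMeasure (b : ℕ) (E : Finset ℕ) : Measure ℝ :=
  Measure.sum (fun X : {l : List ℕ // ∀ d ∈ l, d < b ∧ d ∉ E} =>
    ((b : ℝ≥0∞) ^ X.1.length)⁻¹ •
      Measure.dirac (((Nat.ofDigits b X.1 : ℕ) : ℝ) / (b : ℝ) ^ X.1.length))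

/-- `E₁ = E` if `0 ∉ E`, and `E₁ = (E ∪ {b}) \ {0}` if `0 ∈ E`. -/
def Eone (b : ℕ) (E : Finset ℕ) : Finset ℕ :=
  if 0 ∈ E then insert b (E.erase 0) else E

/-- `ζ(s) = ∑_{k ≥ 1} k⁻ˢ`. -/
noncomputable def zetaVal (s : ℕ) : ℝ := ∑' k : ℕ, (((k : ℝ) + 1) ^ s)⁻¹

/-- `v_m(d) = ∫_{[0,1)} (d - x)^m dμ_{b,E}(x)`. -/
noncomputable def vMoment (b : ℕ) (E : Finset ℕ) (m : ℕ) (d : ℝ) : ℝ :=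
  ∫ x in Set.Ico (0 : ℝ) 1, (d - x) ^ m ∂(kempnerMeasure b E)

/-!
Splitting off the leading digit `a ≠ 0` of an admissible `n` leaves a string `t` of admissible
digits, and `1 / n = b ^ (-|t|) / (a + 0.t)`. Hence `K(b,{d}) = ∫ F dμ`, where
`μ = ∑_t b ^ (-|t|) δ_{0.t}` is the measure `μ_{b,{d}}`, of total mass `b`, and
`F x = ∑_{a ≠ 0, d} 1 / (a + x)`. The recurrence `ψ (x + 1) = ψ x + 1 / x` and Gauss's
multiplication formula give `F = T g / b - g + log b + h / b` on `[0, 1)`, where `g x = ψ (x + 1)`,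
`h x = ψ ((d + x) / b)` and `T g x = ∑_{j ≠ d} g ((x + j) / b)`. Self-similarity of `μ` gives
`∫ T g dμ = b (∫ g dμ - g 0)`, so the `g`-terms collapse to `-ψ 1` and
`K(b,{d}) = b log b - ψ 1 + (1 / b) ∫ h dμ`. As `ψ` is strictly increasing, the average
`(1 / b) ∫ h dμ` lies strictly between `ψ (d / b)` and `ψ ((d + 1) / b)`; strictness on the left
uses a string of positive value, i.e. a nonzero digit other than `d`, which exists as `b > 2`.
-/

open Filter Topology

theorem differentiableAt_log_Gamma {x : ℝ} (hx : 0 < x) :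
    DifferentiableAt ℝ (Real.log ∘ Gamma) x :=
  (differentiableAt_Gamma fun m => by linarith [(m.cast_nonneg : (0 : ℝ) ≤ m)]).log
    (Gamma_pos_of_pos hx).ne'

theorem log_Gamma_add_one {x : ℝ} (hx : 0 < x) :
    Real.log (Gamma (x + 1)) = Real.log (Gamma x) + Real.log x := by
  rw [Gamma_add_one hx.ne', log_mul hx.ne' (Gamma_pos_of_pos hx).ne', add_comm]

theorem digamma_add_one {x : ℝ} (hx : 0 < x) : digamma (x + 1) = digamma x + x⁻¹ := by
  have hloc : (fun y => Real.log (Gamma (y + 1))) =ᶠ[𝓝 x]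
      fun y => (Real.log ∘ Gamma) y + Real.log y := by
    filter_upwards [eventually_gt_nhds hx] with y hy using log_Gamma_add_one hy
  rw [digamma, ← deriv_comp_add_const, hloc.deriv_eq,
    deriv_fun_add (differentiableAt_log_Gamma hx) (differentiableAt_log hx.ne'), deriv_log]
  rfl

theorem digamma_add_nat {x : ℝ} (hx : 0 < x) (n : ℕ) :
    digamma (x + n) = digamma x + ∑ k ∈ Finset.range n, (x + k)⁻¹ := by
  induction n with
  | zero => simp
  | succ n ih =>
    rw [Nat.cast_succ, ← add_assoc, digamma_add_one (by positivity), ih, Finset.sum_range_succ,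
      add_assoc]

theorem digamma_monotoneOn : MonotoneOn digamma (Set.Ioi 0) :=
  convexOn_log_Gamma.monotoneOn_deriv fun _ hx => differentiableAt_log_Gamma hx

theorem digamma_strictMonoOn : StrictMonoOn digamma (Set.Ioi 0) := by
  intro x hx y hy hxy
  refine (digamma_monotoneOn hx hy hxy.le).lt_of_ne fun heq => ?_
  have hshift := digamma_monotoneOn (Set.mem_Ioi.mpr (by linarith [hx.out] : 0 < x + 1))
    (Set.mem_Ioi.mpr (by linarith [hy.out] : 0 < y + 1)) (by linarith)
  rw [digamma_add_one hx, digamma_add_one hy, heq] at hshift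
  linarith [inv_strictAnti₀ hx.out hxy]

theorem slope_log_Gamma {x : ℝ} (hx : 0 < x) :
    slope (Real.log ∘ Gamma) x (x + 1) = Real.log x := by
  simp [slope_def_field, log_Gamma_add_one hx]

theorem digamma_le_log {x : ℝ} (hx : 0 < x) : digamma x ≤ Real.log x :=
  slope_log_Gamma hx ▸ convexOn_log_Gamma.deriv_le_slope hx (Set.mem_Ioi.mpr (by linarith))
    (by linarith) (differentiableAt_log_Gamma hx)

theorem log_le_digamma_add_one {x : ℝ} (hx : 0 < x) : Real.log x ≤ digamma (x + 1) :=
  slope_log_Gamma hx ▸ convexOn_log_Gamma.slope_le_deriv hx (Set.mem_Ioi.mpr (by linarith))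
    (by linarith) (differentiableAt_log_Gamma (by linarith))

theorem tendsto_digamma_sub_log : Tendsto (fun x => digamma x - Real.log x) atTop (𝓝 0) := by
  have hlow : Tendsto (fun x => Real.log (x + -1) - Real.log x) atTop (𝓝 0) :=
    tendsto_log_comp_add_sub_log (-1)
  refine tendsto_of_tendsto_of_tendsto_of_le_of_le' hlow tendsto_const_nhds ?_ ?_
  · filter_upwards [eventually_gt_atTop 1] with x hx
    have := log_le_digamma_add_one (x := x - 1) (by linarith)
    rw [sub_add_cancel] at this
    rw [← sub_eq_add_neg]; linarith
  · filter_upwards [eventually_gt_atTop 0] with x hx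
    linarith [digamma_le_log hx]

theorem sum_digamma_add_one_add_div {b : ℕ} (hb : 0 < b) {z : ℝ} (hz : 0 < z) :
    ∑ j ∈ Finset.range b, digamma ((z + 1 + j) / b)
      = ∑ j ∈ Finset.range b, digamma ((z + j) / b) + b / z := by
  have hshift := Finset.sum_range_succ' (fun j : ℕ => digamma ((z + j) / b)) b
  rw [Finset.sum_range_succ] at hshift
  have hlast : (z + b) / b = z / b + 1 := by field_simp
  rw [hlast, digamma_add_one (by positivity), inv_div] at hshift
  simp only [Nat.cast_add, Nat.cast_one, Nat.cast_zero, add_zero] at hshift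
  simp only [add_assoc, add_comm (1 : ℝ)]
  linarith

theorem tendsto_sum_digamma_add_div_sub {b : ℕ} (hb : 0 < b) :
    Tendsto (fun z => ∑ j ∈ Finset.range b, digamma ((z + j) / b) - b * digamma z) atTop
      (𝓝 (-(b * Real.log b))) := by
  have hb' : (0 : ℝ) < b := by exact_mod_cast hb
  have hterm (j : ℕ) : Tendsto (fun z : ℝ => digamma ((z + j) / b) - Real.log ((z + j) / b))
      atTop (𝓝 0) :=
    tendsto_digamma_sub_log.comp
      ((tendsto_atTop_add_const_right _ _ tendsto_id).atTop_div_const hb')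
  have hlim := ((tendsto_finsetSum (Finset.range b) fun j _ => hterm j).sub
    (tendsto_digamma_sub_log.const_mul (b : ℝ))).add
    ((tendsto_finsetSum (Finset.range b) fun j _ => tendsto_log_comp_add_sub_log (j : ℝ)).sub
      (tendsto_const_nhds (x := (b : ℝ) * Real.log b)))
  simp only [Finset.sum_const_zero, mul_zero, sub_zero, zero_add, zero_sub] at hlim
  refine hlim.congr' ?_
  filter_upwards [eventually_gt_atTop 0] with z hz
  have hlog (j : ℕ) : Real.log ((z + j) / b) = Real.log (z + j) - Real.log b :=
    Real.log_div (by positivity) hb'.ne'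
  simp only [hlog, Finset.sum_sub_distrib, Finset.sum_const, Finset.card_range, nsmul_eq_mul]
  ring

/-- Gauss's multiplication formula for `ψ`: the difference of the two sides is `1`-periodic in `y`
and tends to `0` at infinity. -/
theorem sum_digamma_add_div {b : ℕ} (hb : 0 < b) {y : ℝ} (hy : 0 < y) :
    ∑ j ∈ Finset.range b, digamma ((y + j) / b) = b * digamma y - b * Real.log b := by
  set M : ℝ → ℝ := fun z => ∑ j ∈ Finset.range b, digamma ((z + j) / b) - b * digamma z
  have hperiodic (n : ℕ) : M (y + n) = M y := by
    induction n with
    | zero => simp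
    | succ n ih =>
      have hpos : 0 < y + n := by positivity
      simp only [M, Nat.cast_succ, ← add_assoc] at ih ⊢
      rw [sum_digamma_add_one_add_div hb hpos, digamma_add_one hpos, ← ih]
      field_simp
      ring
  have hlim := (tendsto_sum_digamma_add_div_sub hb).comp
    (tendsto_atTop_add_const_left atTop y tendsto_natCast_atTop_atTop)
  have hM : M y = -(b * Real.log b) :=
    tendsto_nhds_unique (tendsto_const_nhds.congr fun n => (hperiodic n).symm) hlim
  simp only [M] at hM
  linarith

theorem tsum_list_eq_add_sum_tsum_concat {α : Type*} [Fintype α] {f : List α → ℝ}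
    (hf : Summable f) : ∑' t, f t = f [] + ∑ a, ∑' t, f (t ++ [a]) := by
  classical
  have hinj : Function.Injective fun p : α × List α => p.2 ++ [p.1] := by
    rintro ⟨a, s⟩ ⟨a', s'⟩ h
    obtain ⟨rfl, h'⟩ := List.append_inj' h rfl
    simp_all
  have hsupp : Function.support (fun t => if t = [] then 0 else f t) ⊆
      Set.range fun p : α × List α => p.2 ++ [p.1] := by
    intro t ht
    obtain ⟨s, a, rfl⟩ := (List.eq_nil_or_concat' t).resolve_left (by simp_all)
    exact ⟨(a, s), rfl⟩
  rw [hf.tsum_eq_add_tsum_ite ([] : List α), ← hinj.tsum_eq hsupp]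
  simp only [List.append_eq_nil_iff, List.cons_ne_nil, and_false, if_false]
  rw [Summable.tsum_prod' (f := fun p : α × List α => f (p.2 ++ [p.1])) (hf.comp_injective hinj)
    fun a => hf.comp_injective (List.append_left_injective [a]), tsum_fintype]

section

variable {b d : ℕ} {D : Finset ℕ}

variable (b) in
noncomputable def digitWeight (t : List D) : ℝ := ((b : ℝ) ^ t.length)⁻¹

variable (b) in
/-- Strings are read least significant digit first, as by `Nat.ofDigits`:
`digitValue b [t₀, …, tₙ₋₁] = 0.tₙ₋₁⋯t₀` in base `b`, so appending a digit to a string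
inserts it right after the point. -/
noncomputable def digitValue (t : List D) : ℝ :=
  ((Nat.ofDigits b (t.map Subtype.val) : ℕ) : ℝ) / (b : ℝ) ^ t.length

variable (b D) in
/-- For `D = range b \ E` this is the integral of `g` against `kempnerMeasure b E`. -/
noncomputable def kempnerIntegral (g : ℝ → ℝ) : ℝ :=
  ∑' t : List D, digitWeight b t * g (digitValue b t)

@[simp] theorem digitWeight_nil : digitWeight b ([] : List D) = 1 := by simp [digitWeight]

@[simp] theorem digitValue_nil : digitValue b ([] : List D) = 0 := by simp [digitValue]

theorem digitValue_singleton (a : D) : digitValue b [a] = a / b := by simp [digitValue]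

theorem digitWeight_pos (hb : 0 < b) (t : List D) : 0 < digitWeight b t := by
  unfold digitWeight; positivity

theorem digitValue_nonneg (t : List D) : 0 ≤ digitValue b t := by
  unfold digitValue; positivity

theorem digitValue_lt_one (hb : 1 < b) (hD : D ⊆ Finset.range b) (t : List D) :
    digitValue b t < 1 := by
  have hdig : ∀ u ∈ t.map Subtype.val, u < b := by
    simp only [List.mem_map]
    rintro _ ⟨a, -, rfl⟩
    exact Finset.mem_range.mp (hD a.2)
  have hlt := Nat.ofDigits_lt_base_pow_length hb hdig
  rw [List.length_map] at hlt
  rw [digitValue, div_lt_one (by positivity)]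
  exact_mod_cast hlt

theorem digitWeight_concat (t : List D) (a : D) :
    digitWeight b (t ++ [a]) = digitWeight b t / b := by
  simp [digitWeight, pow_succ, div_eq_mul_inv, mul_comm]

theorem digitValue_concat (hb : b ≠ 0) (t : List D) (a : D) :
    digitValue b (t ++ [a]) = (digitValue b t + a) / b := by
  simp only [digitValue, List.map_append, List.map_singleton, Nat.ofDigits_append,
    Nat.ofDigits_singleton, List.length_map, List.length_append, List.length_singleton]
  push_cast
  field_simp
  ring

theorem hasSum_digitWeight (hcard : D.card < b) :
    HasSum (digitWeight b : List D → ℝ) (1 - D.card / b)⁻¹ := by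
  have hb : (0 : ℝ) < b := by exact_mod_cast (Nat.zero_le _).trans_lt hcard
  set r : ℝ := D.card / b
  have hr : r < 1 := (div_lt_one hb).mpr (by exact_mod_cast hcard)
  have hgeom : HasSum (fun n => r ^ n) (1 - r)⁻¹ :=
    hasSum_geometric_of_lt_one (by positivity) hr
  let F : (Σ n, Fin n → D) → ℝ := fun p => ((b : ℝ) ^ p.1)⁻¹
  have hfiber (n : ℕ) : HasSum (fun v : Fin n → D => F ⟨n, v⟩) (r ^ n) := by
    rw [show r ^ n = ∑ v : Fin n → D, F ⟨n, v⟩ by simp [F, r, div_pow, ← div_eq_mul_inv]]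
    exact hasSum_fintype _
  have hF : Summable F := (summable_sigma_of_nonneg fun _ => by positivity).mpr
    ⟨fun n => (hfiber n).summable, by simpa only [(hfiber _).tsum_eq] using hgeom.summable⟩
  rw [hgeom.unique (hF.hasSum.sigma hfiber)]
  exact List.equivSigmaTuple.hasSum_iff.mpr hF.hasSum

theorem summable_digitWeight_mul_of_abs_le (hb : 1 < b) (hD : D ⊆ Finset.range b)
    (hcard : D.card < b) {g : ℝ → ℝ} {C : ℝ} (hg : ∀ x ∈ Set.Ico (0 : ℝ) 1, |g x| ≤ C) :
    Summable fun t : List D => digitWeight b t * g (digitValue b t) := by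
  refine Summable.of_norm_bounded ((hasSum_digitWeight hcard).summable.mul_right C) fun t => ?_
  rw [Real.norm_eq_abs, abs_mul, abs_of_pos (digitWeight_pos (by omega) t)]
  exact mul_le_mul_of_nonneg_left (hg _ ⟨digitValue_nonneg t, digitValue_lt_one hb hD t⟩)
    (digitWeight_pos (by omega) t).le

theorem summable_digitWeight_mul_of_monotoneOn (hb : 1 < b) (hD : D ⊆ Finset.range b)
    (hcard : D.card < b) {g : ℝ → ℝ} (hg : MonotoneOn g (Set.Icc 0 1)) :
    Summable fun t : List D => digitWeight b t * g (digitValue b t) := by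
  refine summable_digitWeight_mul_of_abs_le hb hD hcard (C := |g 0| + |g 1|) fun x hx => ?_
  have h0 := hg ⟨le_rfl, zero_le_one⟩ (Set.Ico_subset_Icc_self hx) hx.1
  have h1 := hg (Set.Ico_subset_Icc_self hx) ⟨zero_le_one, le_rfl⟩ hx.2.le
  rw [abs_le]
  constructor <;>
    linarith [neg_abs_le (g 0), le_abs_self (g 1), abs_nonneg (g 0), abs_nonneg (g 1)]

theorem kempnerIntegral_lt_kempnerIntegral (hb : 1 < b) (hD : D ⊆ Finset.range b)
    {f g : ℝ → ℝ} (hf : Summable fun t : List D => digitWeight b t * f (digitValue b t))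
    (hg : Summable fun t : List D => digitWeight b t * g (digitValue b t))
    (hle : ∀ x ∈ Set.Ico (0 : ℝ) 1, f x ≤ g x) {t₀ : List D}
    (hlt : f (digitValue b t₀) < g (digitValue b t₀)) :
    kempnerIntegral b D f < kempnerIntegral b D g := by
  have hw (t : List D) := digitWeight_pos (by omega : 0 < b) t
  refine hf.tsum_lt_tsum (i := t₀) (fun t => ?_) (mul_lt_mul_of_pos_left hlt (hw t₀)) hg
  exact mul_le_mul_of_nonneg_left (hle _ ⟨digitValue_nonneg t, digitValue_lt_one hb hD t⟩)
    (hw t).le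

/-- Self-similarity `μ = δ₀ + b⁻¹ ∑_{a ∈ D} ((· + a) / b)_* μ`, from splitting off the last digit
of a string. -/
theorem hasSum_digitWeight_mul_sum_digit (hb : b ≠ 0) {g : ℝ → ℝ}
    (hg : Summable fun t : List D => digitWeight b t * g (digitValue b t)) :
    HasSum (fun t : List D => digitWeight b t * ∑ a ∈ D, g ((digitValue b t + a) / b))
      (b * (kempnerIntegral b D g - g 0)) := by
  have hslice (a : D) : Summable fun t : List D =>
      digitWeight b (t ++ [a]) * g (digitValue b (t ++ [a])) :=
    hg.comp_injective (List.append_left_injective _)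
  have hsplit := tsum_list_eq_add_sum_tsum_concat hg
  simp only [digitWeight_nil, digitValue_nil, one_mul, digitWeight_concat,
    digitValue_concat hb] at hsplit hslice
  have hsum := hasSum_sum fun a (_ : a ∈ Finset.univ) => ((hslice a).mul_left (b : ℝ)).hasSum
  rw [kempnerIntegral, hsplit, add_sub_cancel_left, Finset.mul_sum]
  simp_rw [← tsum_mul_left]
  refine hsum.congr_fun fun t => ?_
  rw [Finset.mul_sum, ← Finset.sum_coe_sort D]
  congr 1; funext a
  field_simp

variable (b) in
def stringNumber (p : D.erase 0 × List D) : ℕ :=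
  Nat.ofDigits b (p.2.map Subtype.val ++ [(p.1 : ℕ)])

theorem digits_stringNumber (hb : 1 < b) (hD : D ⊆ Finset.range b) (p : D.erase 0 × List D) :
    Nat.digits b (stringNumber b p) = p.2.map Subtype.val ++ [(p.1 : ℕ)] := by
  have hp := Finset.mem_erase.mp p.1.2
  refine Nat.digits_ofDigits b hb _ (fun u hu => ?_) fun _ => by simpa using hp.1
  simp only [List.mem_append, List.mem_map, List.mem_singleton] at hu
  rcases hu with ⟨a, -, rfl⟩ | rfl
  · exact Finset.mem_range.mp (hD a.2)
  · exact Finset.mem_range.mp (hD hp.2)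

theorem stringNumber_injective (hb : 1 < b) (hD : D ⊆ Finset.range b) :
    Function.Injective (stringNumber b : D.erase 0 × List D → ℕ) := by
  intro p q h
  have hdig := congrArg (Nat.digits b) h
  rw [digits_stringNumber hb hD, digits_stringNumber hb hD] at hdig
  obtain ⟨ht, ha⟩ := List.append_inj' hdig rfl
  exact Prod.ext (Subtype.ext (by simpa using ha))
    (List.map_injective_iff.mpr Subtype.val_injective ht)

theorem inv_stringNumber (hb : b ≠ 0) (p : D.erase 0 × List D) :
    (stringNumber b p : ℝ)⁻¹ = digitWeight b p.2 * ((p.1 : ℝ) + digitValue b p.2)⁻¹ := by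
  simp only [stringNumber, digitWeight, digitValue, Nat.ofDigits_append, Nat.ofDigits_singleton,
    List.length_map]
  rw [← mul_inv]
  push_cast
  field_simp
  ring

theorem exists_stringNumber_eq {E : Finset ℕ} (hb : 1 < b) {n : ℕ} (hn : n ≠ 0)
    (hE : ∀ u ∈ Nat.digits b n, u ∉ E) :
    ∃ p : ↥((Finset.range b \ E).erase 0) × List ↥(Finset.range b \ E),
      stringNumber b p = n := by
  have hL : Nat.digits b n ≠ [] := Nat.digits_ne_nil_iff_ne_zero.mpr hn
  have hmem : ∀ u ∈ Nat.digits b n, u ∈ Finset.range b \ E := fun u hu =>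
    Finset.mem_sdiff.mpr ⟨Finset.mem_range.mpr (Nat.digits_lt_base hb hu), hE u hu⟩
  have hlast : (Nat.digits b n).getLast hL ∈ (Finset.range b \ E).erase 0 :=
    Finset.mem_erase.mpr ⟨Nat.getLast_digit_ne_zero b hn, hmem _ (List.getLast_mem hL)⟩
  lift (Nat.digits b n).dropLast to List ↥(Finset.range b \ E) with s hs
  · exact fun u hu => hmem u (List.dropLast_subset _ hu)
  refine ⟨(⟨_, hlast⟩, s), ?_⟩
  rw [stringNumber, hs, List.dropLast_append_getLast hL, Nat.ofDigits_digits]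

theorem kempnerSum_eq_kempnerIntegral {E : Finset ℕ} (hb : 1 < b)
    (hcard : (Finset.range b \ E).card < b) :
    kempnerSum b E = kempnerIntegral b (Finset.range b \ E)
      fun x => ∑ a ∈ (Finset.range b \ E).erase 0, ((a : ℝ) + x)⁻¹ := by
  set D := Finset.range b \ E
  have hD : D ⊆ Finset.range b := Finset.sdiff_subset
  set term : ℕ → ℝ := fun n => if n ≠ 0 ∧ ∀ u ∈ Nat.digits b n, u ∉ E then (n : ℝ)⁻¹ else 0
  have hterm (p : D.erase 0 × List D) :
      term (stringNumber b p) = digitWeight b p.2 * ((p.1 : ℝ) + digitValue b p.2)⁻¹ := by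
    have hdig := digits_stringNumber hb hD p
    have hadm : ∀ u ∈ Nat.digits b (stringNumber b p), u ∉ E := by
      simp only [hdig, List.mem_append, List.mem_map, List.mem_singleton]
      rintro u (⟨a, -, rfl⟩ | rfl)
      · exact (Finset.mem_sdiff.mp a.2).2
      · exact (Finset.mem_sdiff.mp (Finset.mem_erase.mp p.1.2).2).2
    have hne : stringNumber b p ≠ 0 :=
      (Nat.digits_ne_nil_iff_ne_zero (b := b)).mp (by simp [hdig])
    simp only [term, if_pos (And.intro hne hadm), inv_stringNumber (by omega : b ≠ 0)]
  have hsupp :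
      Function.support term ⊆ Set.range (stringNumber b : D.erase 0 × List D → ℕ) := by
    intro n hn
    by_cases h : n ≠ 0 ∧ ∀ u ∈ Nat.digits b n, u ∉ E
    · exact exists_stringNumber_eq hb h.1 h.2
    · simp [term, h] at hn
  have hleading (a : D.erase 0) (x : ℝ) (hx : 0 ≤ x) : 1 ≤ ((a : ℕ) : ℝ) + x := by
    have : (1 : ℝ) ≤ (a : ℕ) :=
      Nat.one_le_cast.mpr (Nat.one_le_iff_ne_zero.mpr (Finset.mem_erase.mp a.2).1)
    linarith
  have hslice (a : D.erase 0) : Summable fun t : List D =>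
      digitWeight b t * ((a : ℝ) + digitValue b t)⁻¹ :=
    summable_digitWeight_mul_of_abs_le (g := fun x => ((a : ℝ) + x)⁻¹) hb hD hcard (C := 1)
      fun x hx => by
        have h1 := hleading a x hx.1
        rw [abs_inv, abs_of_pos (zero_lt_one.trans_le h1)]
        exact inv_le_one_of_one_le₀ h1
  have hprod : Summable fun p : D.erase 0 × List D =>
      digitWeight b p.2 * ((p.1 : ℝ) + digitValue b p.2)⁻¹ := by
    refine (summable_prod_of_nonneg fun p => ?_).mpr ⟨hslice, Summable.of_finite⟩
    have := digitWeight_pos (by omega : 0 < b) p.2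
    have := hleading p.1 _ (digitValue_nonneg (b := b) p.2)
    positivity
  calc kempnerSum b E = ∑' p, term (stringNumber b p) :=
        ((stringNumber_injective hb hD).tsum_eq hsupp).symm
    _ = ∑ a : D.erase 0, ∑' t : List D, digitWeight b t * ((a : ℝ) + digitValue b t)⁻¹ := by
        rw [tsum_congr hterm, hprod.tsum_prod' hslice, tsum_fintype]
    _ = _ := by
        rw [kempnerIntegral, ← Summable.tsum_finsetSum fun a _ => hslice a]
        simp_rw [Finset.mul_sum]
        exact tsum_congr fun t => Finset.sum_coe_sort (D.erase 0)
          fun a : ℕ => digitWeight b t * ((a : ℝ) + digitValue b t)⁻¹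

theorem sum_inv_add_range_erase_zero (hb : 0 < b) {x : ℝ} (hx : 0 ≤ x) :
    ∑ a ∈ (Finset.range b).erase 0, ((a : ℝ) + x)⁻¹ = digamma (x + b) - digamma (x + 1) := by
  obtain ⟨m, rfl⟩ := Nat.exists_eq_add_one_of_ne_zero hb.ne'
  rw [Finset.sum_erase_eq_sub (Finset.mem_range.mpr hb), Finset.sum_range_succ',
    add_sub_cancel_right, Nat.cast_succ, add_comm (m : ℝ), ← add_assoc,
    digamma_add_nat (by positivity)]
  simp only [Nat.cast_succ, add_sub_cancel_left]
  exact Finset.sum_congr rfl fun k _ => by ring_nf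

theorem sum_digamma_range_sdiff_singleton (hd0 : 0 < d) (hdb : d < b) {x : ℝ} (hx : 0 ≤ x) :
    ∑ j ∈ Finset.range b \ {d}, digamma ((x + j) / b + 1)
      = b * digamma (x + b) - b * Real.log b - digamma ((d + x) / b) - b / (d + x) := by
  have hb : (0 : ℝ) < b := by exact_mod_cast hd0.trans hdb
  have hgauss := sum_digamma_add_div (hd0.trans hdb) (by positivity : 0 < x + b)
  have hshift (j : ℕ) : (x + b + j) / b = (x + j) / b + 1 := by field_simp; ring
  simp only [hshift] at hgauss
  rw [Finset.sdiff_singleton_eq_erase, Finset.sum_erase_eq_sub (Finset.mem_range.mpr hdb),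
    hgauss, digamma_add_one (by positivity), add_comm x (d : ℝ), inv_div]
  ring

theorem sum_inv_add_eq_digamma (hd0 : 0 < d) (hdb : d < b) {x : ℝ} (hx : 0 ≤ x) :
    ∑ a ∈ (Finset.range b \ {d}).erase 0, ((a : ℝ) + x)⁻¹
      = (∑ j ∈ Finset.range b \ {d}, digamma ((x + j) / b + 1)) / b - digamma (x + 1)
        + Real.log b + digamma ((d + x) / b) / b := by
  have hb : (0 : ℝ) < b := by exact_mod_cast hd0.trans hdb
  have hd : d ∈ (Finset.range b).erase 0 :=
    Finset.mem_erase.mpr ⟨hd0.ne', Finset.mem_range.mpr hdb⟩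
  rw [sum_digamma_range_sdiff_singleton hd0 hdb hx, Finset.sdiff_singleton_eq_erase,
    Finset.erase_right_comm, Finset.sum_erase_eq_sub hd,
    sum_inv_add_range_erase_zero (by omega) hx]
  field_simp
  ring

theorem card_range_sdiff_singleton (hdb : d < b) : (Finset.range b \ {d}).card = b - 1 := by
  rw [Finset.sdiff_singleton_eq_erase, Finset.card_erase_of_mem (Finset.mem_range.mpr hdb),
    Finset.card_range]

theorem hasSum_digitWeight_range_sdiff_singleton (hdb : d < b) :
    HasSum (digitWeight b : List ↥(Finset.range b \ {d}) → ℝ) b := by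
  have hb : (0 : ℝ) < b := by exact_mod_cast (Nat.zero_le d).trans_lt hdb
  have hcard := card_range_sdiff_singleton hdb
  convert hasSum_digitWeight (hcard ▸ Nat.sub_lt (by omega) one_pos) using 1
  rw [hcard, Nat.cast_sub (by omega), Nat.cast_one]
  field_simp
  ring

theorem strictMonoOn_digamma_add_div {c s : ℝ} (hc : 0 < c) (hs : 0 < s) :
    StrictMonoOn (fun x => digamma ((c + x) / s)) (Set.Ici 0) := fun x hx y hy hxy =>
  digamma_strictMonoOn (div_pos (by linarith [hx.out]) hs) (div_pos (by linarith [hy.out]) hs)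
    (by gcongr)

theorem summable_digitWeight_mul_digamma_add_div (hb : 1 < b) (hd0 : 0 < d) (hdb : d < b) :
    Summable fun t : List ↥(Finset.range b \ {d}) =>
      digitWeight b t * digamma ((d + digitValue b t) / b) :=
  summable_digitWeight_mul_of_monotoneOn hb Finset.sdiff_subset
    (by rw [card_range_sdiff_singleton hdb]; omega)
    ((strictMonoOn_digamma_add_div (by positivity) (by positivity)).monotoneOn.mono
      Set.Icc_subset_Ici_self)

theorem kempnerSum_singleton_eq (hb : 1 < b) (hd0 : 0 < d) (hdb : d < b) :
    kempnerSum b {d} = b * Real.log b - digamma 1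
      + kempnerIntegral b (Finset.range b \ {d}) (fun x => digamma ((d + x) / b)) / b := by
  have hcard : (Finset.range b \ {d}).card < b := by rw [card_range_sdiff_singleton hdb]; omega
  have hg : Summable fun t : List ↥(Finset.range b \ {d}) =>
      digitWeight b t * digamma (digitValue b t + 1) :=
    summable_digitWeight_mul_of_monotoneOn (g := fun x => digamma (x + 1)) hb Finset.sdiff_subset
      hcard fun x hx y hy hxy =>
      digamma_monotoneOn (Set.mem_Ioi.mpr (by linarith [hx.1]))
        (Set.mem_Ioi.mpr (by linarith [hy.1])) (by linarith)
  have hshift :=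
    hasSum_digitWeight_mul_sum_digit (g := fun x => digamma (x + 1)) (by omega) hg
  have hmass := (hasSum_digitWeight_range_sdiff_singleton hdb).mul_right (Real.log b)
  have hh := (summable_digitWeight_mul_digamma_add_div hb hd0 hdb).hasSum
  have hF := (((hshift.div_const b).sub hg.hasSum).add hmass).add (hh.div_const b)
  rw [kempnerSum_eq_kempnerIntegral hb hcard, kempnerIntegral,
    (hF.congr_fun fun t => ?_).tsum_eq]
  · simp only [kempnerIntegral, zero_add]
    field_simp
    ring
  · rw [sum_inv_add_eq_digamma hd0 hdb (digitValue_nonneg t)]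
    ring

theorem kempnerIntegral_digamma_add_div_div_mem_Ioo (hb : 2 < b) (hd0 : 0 < d) (hdb : d < b) :
    kempnerIntegral b (Finset.range b \ {d}) (fun x => digamma ((d + x) / b)) / b
      ∈ Set.Ioo (digamma (d / b)) (digamma ((d + 1) / b)) := by
  set D := Finset.range b \ {d}
  have hbR : (0 : ℝ) < b := by positivity
  have hmono := strictMonoOn_digamma_add_div (c := d) (s := b) (by positivity) hbR
  have hh := summable_digitWeight_mul_digamma_add_div (by omega) hd0 hdb
  have hw := hasSum_digitWeight_range_sdiff_singleton hdb
  have hconst (c : ℝ) : kempnerIntegral b D (fun _ => c) = b * c := (hw.mul_right c).tsum_eq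
  obtain ⟨a, haD, ha0⟩ : ∃ a ∈ D, a ≠ 0 := by
    refine ⟨if d = 1 then 2 else 1, ?_, by split_ifs <;> omega⟩
    simp only [D, Finset.mem_sdiff, Finset.mem_range, Finset.mem_singleton]
    split_ifs <;> omega
  constructor
  · rw [lt_div_iff₀ hbR, mul_comm, ← hconst]
    refine kempnerIntegral_lt_kempnerIntegral (by omega) Finset.sdiff_subset
      (hw.summable.mul_right _) hh (fun x hx => ?_) (t₀ := [⟨a, haD⟩]) ?_
    · simpa using hmono.monotoneOn Set.self_mem_Ici hx.1 hx.1
    · simpa [digitValue_singleton] using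
        hmono Set.self_mem_Ici (by positivity : (0 : ℝ) ≤ a / b) (by positivity)
  · rw [div_lt_iff₀ hbR, mul_comm, ← hconst]
    refine kempnerIntegral_lt_kempnerIntegral (by omega) Finset.sdiff_subset
      hh (hw.summable.mul_right _) (fun x hx => ?_) (t₀ := []) ?_
    · simpa [add_comm] using hmono.monotoneOn hx.1 (zero_le_one : (0 : ℝ) ≤ 1) hx.2.le
    · simpa [add_comm] using hmono Set.self_mem_Ici (zero_le_one : (0 : ℝ) ≤ 1) one_pos

end

theorem kempner_single_digit_bounds (b : ℕ) (hb : 2 < b) (d : ℕ)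
    (hd0 : 0 < d) (hdb : d < b) :
    (b : ℝ) * Real.log b + digamma ((d : ℝ) / b) - digamma 1 < kempnerSum b {d} ∧
    kempnerSum b {d} < (b : ℝ) * Real.log b + digamma (((d : ℝ) + 1) / b) - digamma 1 := by
  obtain ⟨hlow, hhigh⟩ := kempnerIntegral_digamma_add_div_div_mem_Ioo hb hd0 hdb
  rw [kempnerSum_singleton_eq (by omega) hd0 hdb]
  constructor <;> linarith
end

section
/- Let b > 2 be an integer. Then the map d ↦ K(b,{d}) is strictly increasing on the positive digits: for all integers d, d' with 1 ≤ d < d' ≤ b−1 one has K(b,{d}) < K(b,{d'}); moreover K(b,{d}) < b·log(b) for every positive digit d. -/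
open MeasureTheory Real ENNReal

/-! The bound comes from a potential on the base-`b` digit tree, in which the children of `m ≥ 1`
are the numbers `m b + r` with `r < b`. With `θ = (b - 2) / (b - 1)` and
`g(x) = b (log (x + θ) - log (x - 1 + θ))`, every admissible node `m` satisfies
`1 / m + ∑ g(admissible children) < g(m)`: some child ends in the excluded digit and `g` is
decreasing, so the children's potentials are at most those of `m b, …, m b + b - 2`, which
telescope. Summing level by level, every partial sum of `K(b, E)` stays below the total potential
of the admissible one-digit numbers, and that telescopes to at most `b log b`.

For monotonicity, exchanging the digits `d < d'` maps the numbers avoiding `d` bijectively onto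
those avoiding `d'` without ever increasing a number, and it sends `d'` to `d`. -/

open Finset

theorem Finset.sum_Ico_mul_eq_sum_sum {M : Type*} [AddCommMonoid M] (f : ℕ → M) (b : ℕ)
    {t u : ℕ} (htu : t ≤ u) :
    ∑ j ∈ Ico (t * b) (u * b), f j = ∑ m ∈ Ico t u, ∑ r ∈ range b, f (m * b + r) := by
  induction u, htu using Nat.le_induction with
  | base => simp
  | succ u htu ih =>
    rw [sum_Ico_succ_top htu, ← ih, ← sum_Ico_consecutive _ (Nat.mul_le_mul_right b htu)
      (Nat.mul_le_mul_right b u.le_succ)]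
    congr 1
    rw [sum_Ico_eq_sum_range, Nat.succ_mul, Nat.add_sub_cancel_left]

section DigitTree

variable {b : ℕ} {F G : ℕ → ℝ}

theorem sum_Ico_add_sum_Ico_mul_le
    (hnode : ∀ m ≥ 1, F m + ∑ r ∈ range b, G (m * b + r) ≤ G m) {t u : ℕ} (ht : 1 ≤ t)
    (htu : t ≤ u) :
    ∑ m ∈ Ico t u, F m + ∑ j ∈ Ico (t * b) (u * b), G j ≤ ∑ m ∈ Ico t u, G m := by
  rw [sum_Ico_mul_eq_sum_sum _ _ htu, ← sum_add_distrib]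
  exact sum_le_sum fun m hm => hnode m (ht.trans (mem_Ico.1 hm).1)

theorem sum_Ico_mul_pow_le (hb : 0 < b) (hG : ∀ n, 0 ≤ G n)
    (hnode : ∀ m ≥ 1, F m + ∑ r ∈ range b, G (m * b + r) ≤ G m) {s : ℕ} (hs : 1 ≤ s)
    (k : ℕ) :
    ∑ n ∈ Ico s (s * b ^ k), F n ≤ ∑ n ∈ Ico s (s * b), G n := by
  have hmono : ∀ k, s * b ^ k ≤ s * b ^ (k + 1) := fun k =>
    Nat.mul_le_mul_left s (Nat.pow_le_pow_right hb k.le_succ)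
  have hlevel : ∀ k, ∑ n ∈ Ico s (s * b ^ k), F n
      + ∑ n ∈ Ico (s * b ^ k) (s * b ^ (k + 1)), G n ≤ ∑ n ∈ Ico s (s * b), G n := by
    intro k
    induction k with
    | zero => simp
    | succ k ih =>
      have hstep := sum_Ico_add_sum_Ico_mul_le hnode (t := s * b ^ k) (u := s * b ^ (k + 1))
        (hs.trans (Nat.le_mul_of_pos_right s (pow_pos hb k))) (hmono k)
      rw [← sum_Ico_consecutive _ (Nat.le_mul_of_pos_right s (pow_pos hb k)) (hmono k)]
      simp only [pow_succ, ← mul_assoc] at hstep ih ⊢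
      linarith
  linarith [hlevel k, sum_nonneg fun n (_ : n ∈ Ico (s * b ^ k) (s * b ^ (k + 1))) => hG n]

theorem summable_and_tsum_le_of_node (hb : 1 < b) (hF : ∀ n, 0 ≤ F n) (hG : ∀ n, 0 ≤ G n)
    (hnode : ∀ m ≥ 1, F m + ∑ r ∈ range b, G (m * b + r) ≤ G m) :
    Summable F ∧ ∑' n, F n ≤ ∑ n ∈ range b, F n + ∑ n ∈ Ico b (b * b), G n := by
  have hpartial :
      ∀ N, ∑ n ∈ range N, F n ≤ ∑ n ∈ range b, F n + ∑ n ∈ Ico b (b * b), G n := by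
    intro N
    have hN : N ≤ b * b ^ N :=
      (Nat.lt_pow_self hb).le.trans (Nat.le_mul_of_pos_left _ (by omega))
    calc ∑ n ∈ range N, F n ≤ ∑ n ∈ range (b * b ^ N), F n :=
          sum_le_sum_of_subset_of_nonneg (range_subset_range.2 hN) fun n _ _ => hF n
      _ = ∑ n ∈ range b, F n + ∑ n ∈ Ico b (b * b ^ N), F n :=
          (sum_range_add_sum_Ico _ (Nat.le_mul_of_pos_right b (by positivity))).symm
      _ ≤ _ := by gcongr; exact sum_Ico_mul_pow_le (by omega) hG hnode (by omega) N
  exact ⟨summable_of_sum_range_le hF hpartial, Real.tsum_le_of_sum_range_le hF hpartial⟩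

end DigitTree

section Potential

/-- The shift `θ` satisfies `b - 2 + θ = b θ`, which makes the potentials of the one-digit
numbers `1, …, b - 2` telescope to `b log b`. -/
noncomputable def kempnerShift (b : ℕ) : ℝ := (b - 2) / (b - 1)

noncomputable def kempnerPotential (b : ℕ) (x : ℝ) : ℝ :=
  b * (Real.log (x + kempnerShift b) - Real.log (x - 1 + kempnerShift b))

variable {b : ℕ}

theorem kempnerShift_pos (hb : 2 < b) : 0 < kempnerShift b := by
  have : (2 : ℝ) < b := by exact_mod_cast hb
  unfold kempnerShift
  apply div_pos <;> linarith

theorem kempnerShift_lt_one (hb : 1 < b) : kempnerShift b < 1 := by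
  have : (1 : ℝ) < b := by exact_mod_cast hb
  rw [kempnerShift, div_lt_one (by linarith)]
  linarith

theorem kempnerShift_mul_sub_one (hb : 1 < b) : kempnerShift b * (b - 1) = b - 2 := by
  have : (1 : ℝ) < b := by exact_mod_cast hb
  rw [kempnerShift, div_mul_cancel₀ _ (by linarith)]

theorem kempnerPotential_antitoneOn (hb : 2 < b) :
    AntitoneOn (kempnerPotential b) (Set.Ici 1) := by
  intro x (hx : 1 ≤ x) y (hy : 1 ≤ y) hxy
  have hθ := kempnerShift_pos hb
  set θ := kempnerShift b
  have hcross : Real.log ((y + θ) * (x - 1 + θ)) ≤ Real.log ((x + θ) * (y - 1 + θ)) :=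
    Real.log_le_log (by nlinarith) (by nlinarith)
  rw [Real.log_mul (by linarith) (by linarith), Real.log_mul (by linarith) (by linarith)]
    at hcross
  exact mul_le_mul_of_nonneg_left (by linarith) b.cast_nonneg

theorem kempnerPotential_nonneg (hb : 2 < b) {x : ℝ} (hx : 1 ≤ x) :
    0 ≤ kempnerPotential b x := by
  have hθ := kempnerShift_pos hb
  have : Real.log (x - 1 + kempnerShift b) ≤ Real.log (x + kempnerShift b) :=
    Real.log_le_log (by linarith) (by linarith)
  unfold kempnerPotential
  exact mul_nonneg b.cast_nonneg (by linarith)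

theorem sum_range_kempnerPotential (x : ℝ) (k : ℕ) :
    ∑ r ∈ range k, kempnerPotential b (x + r)
      = b * (Real.log (x + k - 1 + kempnerShift b) - Real.log (x - 1 + kempnerShift b)) := by
  have h := sum_range_sub (fun r : ℕ => (b : ℝ) * Real.log (x + r - 1 + kempnerShift b)) k
  simp only [Nat.cast_add, Nat.cast_one, Nat.cast_zero, add_zero] at h
  rw [mul_sub, ← h]
  refine sum_congr rfl fun r _ => ?_
  rw [kempnerPotential, mul_sub]
  ring_nf

theorem sum_range_kempnerPotential_one_add (hb : 2 < b) :
    ∑ r ∈ range (b - 2), kempnerPotential b (1 + r) = b * Real.log b := by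
  have hθ := kempnerShift_pos hb
  have hfixed : 1 + ((b - 2 : ℕ) : ℝ) - 1 + kempnerShift b = b * kempnerShift b := by
    rw [Nat.cast_sub hb.le]
    linear_combination (-1 : ℝ) * kempnerShift_mul_sub_one (b := b) (by omega)
  rw [sum_range_kempnerPotential, hfixed, sub_self, zero_add,
    Real.log_mul (by positivity) hθ.ne']
  ring

theorem inv_add_sum_range_kempnerPotential_lt (hb : 2 < b) {m : ℝ} (hm : 1 ≤ m) :
    m⁻¹ + ∑ r ∈ range (b - 1), kempnerPotential b (m * b + r) < kempnerPotential b m := by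
  rw [sum_range_kempnerPotential, kempnerPotential, Nat.cast_sub (by omega), Nat.cast_one]
  have hB : (2 : ℝ) < b := by exact_mod_cast hb
  have hθ := kempnerShift_pos hb
  have hθ1 := kempnerShift_lt_one (b := b) (by omega)
  have hθb := kempnerShift_mul_sub_one (b := b) (by omega)
  set θ := kempnerShift b
  have hmb : b ≤ m * b := by nlinarith
  have h₁ : 0 < m + θ := by linarith
  have h₂ : 0 < m - 1 + θ := by linarith
  have h₃ : 0 < m * b - 1 + θ := by linarith
  have h₄ : 0 < m * b + b - 2 + θ := by linarith
  set R := (m + θ) * (m * b - 1 + θ) / ((m - 1 + θ) * (m * b + b - 2 + θ)) with hR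
  have hlogR : Real.log R = Real.log (m + θ) - Real.log (m - 1 + θ)
      - (Real.log (m * b + b - 2 + θ) - Real.log (m * b - 1 + θ)) := by
    rw [hR, Real.log_div (by positivity) (by positivity),
      Real.log_mul h₁.ne' h₃.ne', Real.log_mul h₂.ne' h₄.ne']
    ring
  have hnum : (m + θ) * (m * b - 1 + θ) - (m - 1 + θ) * (m * b + b - 2 + θ) = m + θ := by
    linear_combination (-1 : ℝ) * hθb
  have hslack : 1 - R⁻¹ = (m * b - 1 + θ)⁻¹ := by
    rw [hR, inv_div, one_sub_div (by positivity), hnum]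
    field_simp
  have hlog : b * (m * b - 1 + θ)⁻¹ ≤ b * Real.log R := by
    rw [← hslack]
    exact mul_le_mul_of_nonneg_left (Real.one_sub_inv_le_log_of_pos (by positivity))
      b.cast_nonneg
  have hinv : m⁻¹ < b * (m * b - 1 + θ)⁻¹ := by
    rw [← div_eq_mul_inv, lt_div_iff₀ (by linarith), inv_mul_lt_iff₀ (by positivity)]
    linarith
  rw [hlogR] at hlog
  rw [show m * b + (b - 1) - 1 + θ = m * b + b - 2 + θ by ring]
  linarith

end Potential

section Avoiding

def digitAvoiding (b : ℕ) (E : Finset ℕ) : Set ℕ :=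
  {n | n ≠ 0 ∧ ∀ c ∈ Nat.digits b n, c ∉ E}

noncomputable def kempnerTerm (b : ℕ) (E : Finset ℕ) : ℕ → ℝ :=
  (digitAvoiding b E).indicator fun n => (n : ℝ)⁻¹

noncomputable def kempnerPotentialTerm (b : ℕ) (E : Finset ℕ) : ℕ → ℝ :=
  (digitAvoiding b E).indicator fun n => kempnerPotential b n

variable {b : ℕ} {E : Finset ℕ}

theorem kempnerSum_eq_tsum_kempnerTerm : kempnerSum b E = ∑' n, kempnerTerm b E n := by
  classical
  unfold kempnerSum kempnerTerm
  congr 1 with n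
  rw [Set.indicator_apply]
  congr

theorem kempnerTerm_nonneg (n : ℕ) : 0 ≤ kempnerTerm b E n :=
  Set.indicator_nonneg (fun n _ => inv_nonneg.2 n.cast_nonneg) n

theorem zero_notMem_digitAvoiding : 0 ∉ digitAvoiding b E := fun h => h.1 rfl

theorem mem_digitAvoiding_of_lt {n : ℕ} (hn : n ≠ 0) (hnb : n < b) :
    n ∈ digitAvoiding b E ↔ n ∉ E := by
  simp [digitAvoiding, Nat.digits_of_lt b n hn hnb, hn]

theorem mul_add_mem_digitAvoiding_iff (hb : 1 < b) {m r : ℕ} (hm : m ≠ 0) (hr : r < b) :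
    m * b + r ∈ digitAvoiding b E ↔ r ∉ E ∧ m ∈ digitAvoiding b E := by
  have hdigits : Nat.digits b (m * b + r) = r :: Nat.digits b m := by
    rw [← Nat.digits_add b hb r m hr (Or.inr hm)]
    ring_nf
  simp only [digitAvoiding, Set.mem_ofPred_eq, hdigits, List.forall_mem_cons]
  constructor
  · rintro ⟨-, hr, hm'⟩
    exact ⟨hr, hm, hm'⟩
  · rintro ⟨hr, -, hm'⟩
    exact ⟨by positivity, hr, hm'⟩

end Avoiding

section Bound

variable {b : ℕ} {E : Finset ℕ}

theorem sum_range_indicator_kempnerPotential_le (hb : 2 < b) {A : Set ℕ} {k n d : ℕ}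
    (hk : 1 ≤ k) (hd : d ≤ n) (hdA : k + d ∉ A) :
    ∑ r ∈ range (n + 1), A.indicator (fun j : ℕ => kempnerPotential b j) (k + r)
      ≤ ∑ r ∈ range n, kempnerPotential b (k + r : ℕ) := by
  have hdmem : d ∈ range (n + 1) := mem_range.2 (Nat.lt_succ_of_le hd)
  have hg : ∀ j : ℕ, 1 ≤ j → 0 ≤ kempnerPotential b j := fun j hj =>
    kempnerPotential_nonneg hb (by exact_mod_cast hj)
  have hlast : kempnerPotential b (k + n : ℕ) ≤ kempnerPotential b (k + d : ℕ) :=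
    kempnerPotential_antitoneOn hb (Set.mem_Ici.2 (by norm_cast; omega))
      (Set.mem_Ici.2 (by norm_cast; omega)) (by norm_cast; omega)
  have hsplit := add_sum_erase (range (n + 1)) (fun r => kempnerPotential b (k + r : ℕ)) hdmem
  rw [sum_range_succ] at hsplit
  rw [← add_sum_erase _ _ hdmem, Set.indicator_of_notMem hdA, zero_add]
  have hle : ∑ r ∈ (range (n + 1)).erase d, A.indicator (fun j : ℕ => kempnerPotential b j) 
        (k + r)
      ≤ ∑ r ∈ (range (n + 1)).erase d, kempnerPotential b (k + r : ℕ) :=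
    sum_le_sum fun r _ => Set.indicator_apply_le' (fun _ => le_rfl) fun _ => hg _ (by omega)
  linarith

theorem sum_range_kempnerPotentialTerm_mul_add_le (hb : 2 < b) {d : ℕ} (hd : d ∈ E)
    (hdb : d < b) {m : ℕ} (hm : m ≠ 0) :
    ∑ r ∈ range b, kempnerPotentialTerm b E (m * b + r)
      ≤ ∑ r ∈ range (b - 1), kempnerPotential b (m * b + r : ℕ) := by
  obtain ⟨n, rfl⟩ : ∃ n, b = n + 1 := ⟨b - 1, by omega⟩
  exact sum_range_indicator_kempnerPotential_le hb (Nat.one_le_iff_ne_zero.2 (by positivity))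
    (by omega) fun h => ((mul_add_mem_digitAvoiding_iff (by omega) hm hdb).1 h).1 hd

theorem kempnerTerm_add_sum_range_lt (hb : 2 < b) {d : ℕ} (hd : d ∈ E) (hdb : d < b) {m : ℕ}
    (hm : m ∈ digitAvoiding b E) :
    kempnerTerm b E m + ∑ r ∈ range b, kempnerPotentialTerm b E (m * b + r)
      < kempnerPotentialTerm b E m := by
  rw [kempnerTerm, kempnerPotentialTerm, Set.indicator_of_mem hm, Set.indicator_of_mem hm]
  calc _ ≤ (m : ℝ)⁻¹ + ∑ r ∈ range (b - 1), kempnerPotential b (m * b + r : ℕ) := by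
        gcongr
        exact sum_range_kempnerPotentialTerm_mul_add_le hb hd hdb hm.1
    _ < kempnerPotential b m := by
        push_cast
        exact inv_add_sum_range_kempnerPotential_lt hb
          (by exact_mod_cast Nat.one_le_iff_ne_zero.2 hm.1)

theorem kempnerTerm_add_sum_range_le (hb : 2 < b) {d : ℕ} (hd : d ∈ E) (hdb : d < b) {m : ℕ}
    (hm : 1 ≤ m) :
    kempnerTerm b E m + ∑ r ∈ range b, kempnerPotentialTerm b E (m * b + r)
      ≤ kempnerPotentialTerm b E m := by
  by_cases hmA : m ∈ digitAvoiding b E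
  · exact (kempnerTerm_add_sum_range_lt hb hd hdb hmA).le
  · have hchildren : ∀ r ∈ range b, kempnerPotentialTerm b E (m * b + r) = 0 := fun r hr =>
      Set.indicator_of_notMem (fun h => hmA
        ((mul_add_mem_digitAvoiding_iff (by omega) (by omega) (mem_range.1 hr)).1 h).2) _
    rw [sum_eq_zero hchildren, kempnerTerm, kempnerPotentialTerm, Set.indicator_of_notMem hmA,
      Set.indicator_of_notMem hmA, add_zero]

theorem summable_kempnerTerm_and_tsum_le (hb : 2 < b) {d : ℕ} (hd : d ∈ E) (hdb : d < b) :
    Summable (kempnerTerm b E) ∧ ∑' n, kempnerTerm b E n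
      ≤ ∑ m ∈ Ico 1 b,
          (kempnerTerm b E m + ∑ r ∈ range b, kempnerPotentialTerm b E (m * b + r)) := by
  have hG : ∀ n, 0 ≤ kempnerPotentialTerm b E n := fun n =>
    Set.indicator_nonneg (fun n hn => kempnerPotential_nonneg hb
      (by exact_mod_cast Nat.one_le_iff_ne_zero.2 hn.1)) n
  obtain ⟨hsum, hle⟩ := summable_and_tsum_le_of_node (by omega) kempnerTerm_nonneg hG
    fun m hm => kempnerTerm_add_sum_range_le hb hd hdb hm
  refine ⟨hsum, hle.trans_eq ?_⟩
  rw [← sum_range_add_sum_Ico _ (by omega : 1 ≤ b), sum_range_one, kempnerTerm,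
    Set.indicator_of_notMem zero_notMem_digitAvoiding, zero_add, sum_add_distrib]
  congr 1
  simpa using sum_Ico_mul_eq_sum_sum (kempnerPotentialTerm b E) b (by omega : 1 ≤ b)

theorem sum_Ico_kempnerPotentialTerm_le (hb : 2 < b) {d : ℕ} (hd : d ∈ E) (hd0 : d ≠ 0)
    (hdb : d < b) : ∑ m ∈ Ico 1 b, kempnerPotentialTerm b E m ≤ b * Real.log b := by
  have hdA : 1 + (d - 1) ∉ digitAvoiding b E := by
    rw [Nat.add_sub_cancel' (by omega), mem_digitAvoiding_of_lt hd0 hdb, not_not]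
    exact hd
  have h := sum_range_indicator_kempnerPotential_le hb le_rfl (by omega : d - 1 ≤ b - 2) hdA
  push_cast at h
  rwa [sum_Ico_eq_sum_range, show b - 1 = b - 2 + 1 by omega,
    ← sum_range_kempnerPotential_one_add hb]

theorem kempnerSum_lt_mul_log (hb : 2 < b) {d : ℕ} (hd : d ∈ E) (hd0 : d ≠ 0) (hdb : d < b) :
    kempnerSum b E < b * Real.log b := by
  have hle := (summable_kempnerTerm_and_tsum_le hb hd hdb).2
  rw [← kempnerSum_eq_tsum_kempnerTerm] at hle
  have hnode := fun m (hm : m ∈ Ico 1 b) =>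
    kempnerTerm_add_sum_range_le hb hd hdb (mem_Ico.1 hm).1
  by_cases hA : ∃ m ∈ Ico 1 b, m ∈ digitAvoiding b E
  · obtain ⟨m, hm, hmA⟩ := hA
    have hlt := sum_lt_sum hnode ⟨m, hm, kempnerTerm_add_sum_range_lt hb hd hdb hmA⟩
    exact hle.trans_lt (hlt.trans_le (sum_Ico_kempnerPotentialTerm_le hb hd hd0 hdb))
  · push Not at hA
    calc kempnerSum b E ≤ ∑ m ∈ Ico 1 b, kempnerPotentialTerm b E m :=
          hle.trans (sum_le_sum hnode)
      _ = 0 := sum_eq_zero fun m hm => Set.indicator_of_notMem (hA m hm) _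
      _ < b * Real.log b := by
        have : (1 : ℝ) < b := by exact_mod_cast (by omega : 1 < b)
        exact mul_pos (by linarith) (Real.log_pos this)

end Bound

theorem Nat.ofDigits_map_le {b : ℕ} {f : ℕ → ℕ} {L : List ℕ}
    (hf : ∀ c ∈ L, f c ≤ c) :
    Nat.ofDigits b (L.map f) ≤ Nat.ofDigits b L := by
  induction L with
  | nil => rfl
  | cons c L ih =>
    simp only [List.map_cons, Nat.ofDigits_cons]
    have := ih fun c' hc' => hf c' (List.mem_cons_of_mem c hc')
    gcongr
    exact hf c List.mem_cons_self

section SwapDigits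

def swapDigits (b d d' n : ℕ) : ℕ := Nat.ofDigits b ((Nat.digits b n).map (Equiv.swap d d'))

variable {b d d' : ℕ}

theorem digits_swapDigits (hd : d ≠ 0) (hd' : d' ≠ 0) (hdb : d < b) (hd'b : d' < b) (n : ℕ) :
    Nat.digits b (swapDigits b d d' n) = (Nat.digits b n).map (Equiv.swap d d') := by
  have hb : 1 < b := by omega
  apply Nat.digits_ofDigits b hb
  · simp only [List.mem_map]
    rintro _ ⟨c, hc, rfl⟩
    have := Nat.digits_lt_base hb hc
    rw [Equiv.swap_apply_def]
    split_ifs <;> omega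
  · intro hne
    rw [List.getLast_map, Equiv.swap_apply_def]
    have := Nat.getLast_digit_ne_zero b (m := n) (by rintro rfl; simp at hne)
    split_ifs <;> omega

theorem swapDigits_involutive (hd : d ≠ 0) (hd' : d' ≠ 0) (hdb : d < b) (hd'b : d' < b) :
    Function.Involutive (swapDigits b d d') := fun n => by
  rw [swapDigits, digits_swapDigits hd hd' hdb hd'b, List.map_map]
  simp [Function.comp_def, Equiv.swap_apply_self, Nat.ofDigits_digits]

theorem swapDigits_le (hdd' : d < d') {n : ℕ} (hn : d ∉ Nat.digits b n) :
    swapDigits b d d' n ≤ n := by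
  conv_rhs => rw [← Nat.ofDigits_digits b n]
  refine Nat.ofDigits_map_le fun c hc => ?_
  rw [Equiv.swap_apply_def]
  split_ifs <;> grind

theorem swapDigits_mem_digitAvoiding (hd : d ≠ 0) (hdd' : d < d') (hd'b : d' < b) {n : ℕ}
    (hn : n ∈ digitAvoiding b {d}) : swapDigits b d d' n ∈ digitAvoiding b {d'} := by
  have hdigits := digits_swapDigits hd (by omega) (by omega) hd'b n
  refine ⟨fun h0 => hn.1 ?_, ?_⟩
  · rwa [h0, Nat.digits_zero, eq_comm, List.map_eq_nil_iff,
      Nat.digits_eq_nil_iff_eq_zero] at hdigits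
  · rw [hdigits]
    simp only [List.mem_map, Finset.mem_singleton]
    rintro _ ⟨c, hc, rfl⟩ hc'
    have := hn.2 c hc
    rw [Equiv.swap_apply_eq_iff, Equiv.swap_apply_right] at hc'
    simp_all

end SwapDigits

theorem kempnerSum_singleton_lt {b d d' : ℕ} (hd : d ≠ 0) (hdd' : d < d') (hd'b : d' < b) :
    kempnerSum b {d} < kempnerSum b {d'} := by
  have hb : 2 < b := by omega
  have hτ := swapDigits_involutive hd (by omega) (by omega) hd'b
  have hsummable : ∀ {c : ℕ}, c < b → Summable (kempnerTerm b {c}) := fun hc =>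
    (summable_kempnerTerm_and_tsum_le hb (mem_singleton_self _) hc).1
  have hsummable' : Summable fun n => kempnerTerm b {d'} (swapDigits b d d' n) :=
    hτ.toPerm.summable_iff.2 (hsummable hd'b)
  have hle : ∀ n, kempnerTerm b {d} n ≤ kempnerTerm b {d'} (swapDigits b d d' n) := by
    intro n
    by_cases hn : n ∈ digitAvoiding b {d}
    · have hτn := swapDigits_mem_digitAvoiding hd hdd' hd'b hn
      rw [kempnerTerm, kempnerTerm, Set.indicator_of_mem hn, Set.indicator_of_mem hτn]
      exact inv_anti₀ (by exact_mod_cast Nat.pos_of_ne_zero hτn.1)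
        (by exact_mod_cast swapDigits_le hdd' fun h => hn.2 d h (mem_singleton_self d))
    · rw [kempnerTerm, Set.indicator_of_notMem hn]
      exact kempnerTerm_nonneg _
  have hlt : kempnerTerm b {d} d' < kempnerTerm b {d'} (swapDigits b d d' d') := by
    have hτd' : swapDigits b d d' d' = d := by
      simp [swapDigits, Nat.digits_of_lt b d' (by omega) hd'b]
    rw [hτd', kempnerTerm, kempnerTerm, Set.indicator_of_mem, Set.indicator_of_mem]
    · exact inv_strictAnti₀ (by exact_mod_cast Nat.pos_of_ne_zero hd) (by exact_mod_cast hdd')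
    · exact (mem_digitAvoiding_of_lt hd (by omega)).2 (by simp; omega)
    · exact (mem_digitAvoiding_of_lt (by omega) hd'b).2 (by simp; omega)
  calc kempnerSum b {d} = ∑' n, kempnerTerm b {d} n := kempnerSum_eq_tsum_kempnerTerm
    _ < ∑' n, kempnerTerm b {d'} (swapDigits b d d' n) :=
        Summable.tsum_lt_tsum hle hlt (hsummable (by omega)) hsummable'
    _ = kempnerSum b {d'} := by
        rw [kempnerSum_eq_tsum_kempnerTerm]
        exact hτ.toPerm.tsum_eq _

theorem kempner_single_digit_monotone (b : ℕ) (hb : 2 < b) :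
    (∀ d d' : ℕ, 1 ≤ d → d < d' → d' ≤ b - 1 →
      kempnerSum b {d} < kempnerSum b {d'}) ∧
    (∀ d : ℕ, 1 ≤ d → d ≤ b - 1 → kempnerSum b {d} < (b : ℝ) * Real.log b) :=
  ⟨fun _ _ hd hdd' hd'b => kempnerSum_singleton_lt (by omega) hdd' (by omega),
    fun d hd hdb => kempnerSum_lt_mul_log hb (mem_singleton_self d) (by omega) (by omega)⟩
end
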